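/- Let ρ, u be C² fields on ℝ₊ × ℝ² with ∂_t ρ + u·∇ρ = 0, div u = 0, and set X := ∇^⊥ρ. Then for every C² function f on ℝ₊ × ℝ², the commutator [∂_X, ∂_t + u·∇] f = 0, i.e. ∂_X(∂_t f + u·∇f) = (∂_t + u·∇)(∂_X f). -/

import Mathlib

/-- Time derivative ∂_t. -/
noncomputable def pt (f : ℝ → ℝ → ℝ → ℝ) (t x y : ℝ) : ℝ := deriv (fun s => f s x y) t
/-- Spatial derivative ∂₁. -/
noncomputable def p1 (f : ℝ → ℝ → ℝ → ℝ) (t x y : ℝ) : ℝ := deriv (fun s => f t s y) x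
/-- Spatial derivative ∂₂. -/
noncomputable def p2 (f : ℝ → ℝ → ℝ → ℝ) (t x y : ℝ) : ℝ := deriv (fun s => f t x s) y

/-!
On space-time `ℝ × ℝ²` the operators `∂_t + u·∇` and `∂_X` are the derivations along the
vector fields `V = (1, u)` and `W = (0, ∇^⊥ρ)`, and the commutator of two such derivations is the
derivation along their Lie bracket `[V, W] = DW·V - DV·W` (symmetry of second derivatives).
So it suffices that `[V, W] = 0`. Differentiating the transport equation `D_V ρ = 0` along a
constant direction `e` gives `D_V (∂_e ρ) = -∇ρ · ∂_e u`; inserting this into the spatial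
components of `[V, W]` leaves `∂₂ρ · div u` and `-∂₁ρ · div u`, which vanish.
-/

open VectorField

section VectorFields

variable {E F : Type*} [NormedAddCommGroup E] [NormedSpace ℝ E]
  [NormedAddCommGroup F] [NormedSpace ℝ F]

theorem fderiv_apply_comm_of_lieBracket_eq_zero {f : E → F} {V W : E → E} {x : E}
    (hf : ContDiffAt ℝ 2 f x) (hV : DifferentiableAt ℝ V x) (hW : DifferentiableAt ℝ W x)
    (hVW : lieBracket ℝ V W x = 0) :
    fderiv ℝ (fun y ↦ fderiv ℝ f y (W y)) x (V x) =
      fderiv ℝ (fun y ↦ fderiv ℝ f y (V y)) x (W x) := by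
  have h := fderiv_apply_lieBracket hf (by simp) hW hV
  rwa [hVW, map_zero, eq_comm, sub_eq_zero] at h

theorem fderiv_fderiv_apply_of_fderiv_apply_eq_zero {ρ : E → ℝ} {V : E → E} {x : E}
    (hρ : ContDiffAt ℝ 2 ρ x) (hV : DifferentiableAt ℝ V x)
    (htrans : ∀ y, fderiv ℝ ρ y (V y) = 0) (e : E) :
    fderiv ℝ (fun y ↦ fderiv ℝ ρ y e) x (V x) = -fderiv ℝ ρ x (fderiv ℝ V x e) := by
  -- the bracket of `V` with the constant field `e` is `-DV·e`
  have h := fderiv_apply_lieBracket hρ (by simp) (differentiableAt_const e) hV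
  simp only [lieBracket, fderiv_const_apply, zero_apply, zero_sub, map_neg, funext htrans,
    sub_zero] at h
  linarith

end VectorFields

def uncurry3 (g : ℝ → ℝ → ℝ → ℝ) (p : ℝ × ℝ × ℝ) : ℝ := g p.1 p.2.1 p.2.2

section Coordinates

variable {g : ℝ → ℝ → ℝ → ℝ} {t x y : ℝ}

theorem pt_eq_fderiv (hg : DifferentiableAt ℝ (uncurry3 g) (t, x, y)) :
    pt g t x y = fderiv ℝ (uncurry3 g) (t, x, y) (1, 0, 0) := by
  have h := hg.hasFDerivAt.comp_hasDerivAt t <|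
    (hasDerivAt_id t).prodMk ((hasDerivAt_const t x).prodMk (hasDerivAt_const t y))
  exact h.deriv

theorem p1_eq_fderiv (hg : DifferentiableAt ℝ (uncurry3 g) (t, x, y)) :
    p1 g t x y = fderiv ℝ (uncurry3 g) (t, x, y) (0, 1, 0) := by
  have h := hg.hasFDerivAt.comp_hasDerivAt x <|
    (hasDerivAt_const x t).prodMk ((hasDerivAt_id x).prodMk (hasDerivAt_const x y))
  exact h.deriv

theorem p2_eq_fderiv (hg : DifferentiableAt ℝ (uncurry3 g) (t, x, y)) :
    p2 g t x y = fderiv ℝ (uncurry3 g) (t, x, y) (0, 0, 1) := by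
  have h := hg.hasFDerivAt.comp_hasDerivAt y <|
    (hasDerivAt_const y t).prodMk ((hasDerivAt_const y x).prodMk (hasDerivAt_id y))
  exact h.deriv

theorem fderiv_uncurry3_apply (hg : DifferentiableAt ℝ (uncurry3 g) (t, x, y)) (a b c : ℝ) :
    fderiv ℝ (uncurry3 g) (t, x, y) (a, b, c) =
      a * pt g t x y + b * p1 g t x y + c * p2 g t x y := by
  have hdecomp : ((a, b, c) : ℝ × ℝ × ℝ) = a • (1, 0, 0) + b • (0, 1, 0) + c • (0, 0, 1) := by
    simp
  rw [hdecomp, map_add, map_add, map_smul, map_smul, map_smul, pt_eq_fderiv hg,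
    p1_eq_fderiv hg, p2_eq_fderiv hg, smul_eq_mul, smul_eq_mul, smul_eq_mul]

theorem uncurry3_p1 (hg : Differentiable ℝ (uncurry3 g)) :
    uncurry3 (p1 g) = fun q ↦ fderiv ℝ (uncurry3 g) q (0, 1, 0) :=
  funext fun _ ↦ p1_eq_fderiv (hg _)

theorem uncurry3_p2 (hg : Differentiable ℝ (uncurry3 g)) :
    uncurry3 (p2 g) = fun q ↦ fderiv ℝ (uncurry3 g) q (0, 0, 1) :=
  funext fun _ ↦ p2_eq_fderiv (hg _)

theorem contDiff_uncurry3_p1 {n : WithTop ℕ∞} (hg : ContDiff ℝ (n + 1) (uncurry3 g)) :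
    ContDiff ℝ n (uncurry3 (p1 g)) := by
  rw [uncurry3_p1 (hg.differentiable (by simp))]
  exact (hg.fderiv_right le_rfl).clm_apply contDiff_const

theorem contDiff_uncurry3_p2 {n : WithTop ℕ∞} (hg : ContDiff ℝ (n + 1) (uncurry3 g)) :
    ContDiff ℝ n (uncurry3 (p2 g)) := by
  rw [uncurry3_p2 (hg.differentiable (by simp))]
  exact (hg.fderiv_right le_rfl).clm_apply contDiff_const

end Coordinates

theorem fderiv_prodMk_prodMk_apply {E : Type*} [NormedAddCommGroup E] [NormedSpace ℝ E]
    {g₀ g₁ g₂ : E → ℝ} {x : E} (h₀ : DifferentiableAt ℝ g₀ x) (h₁ : DifferentiableAt ℝ g₁ x)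
    (h₂ : DifferentiableAt ℝ g₂ x) (v : E) :
    fderiv ℝ (fun y ↦ (g₀ y, g₁ y, g₂ y)) x v =
      (fderiv ℝ g₀ x v, fderiv ℝ g₁ x v, fderiv ℝ g₂ x v) := by
  rw [h₀.fderiv_prodMk (h₁.prodMk h₂), h₁.fderiv_prodMk h₂]
  rfl

/-- The space-time field `(1, u)`, whose derivation is the material derivative `∂_t + u·∇`. -/
def materialField (u1 u2 : ℝ → ℝ → ℝ → ℝ) : ℝ × ℝ × ℝ → ℝ × ℝ × ℝ :=
  fun q ↦ (1, uncurry3 u1 q, uncurry3 u2 q)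

noncomputable def perpGradField (ρ : ℝ → ℝ → ℝ → ℝ) : ℝ × ℝ × ℝ → ℝ × ℝ × ℝ :=
  fun q ↦ (0, -uncurry3 (p2 ρ) q, uncurry3 (p1 ρ) q)

section Fields

variable {ρ u1 u2 : ℝ → ℝ → ℝ → ℝ}

theorem differentiable_materialField (hu1 : Differentiable ℝ (uncurry3 u1))
    (hu2 : Differentiable ℝ (uncurry3 u2)) : Differentiable ℝ (materialField u1 u2) := fun q ↦
  (differentiableAt_const _).prodMk ((hu1 q).prodMk (hu2 q))

theorem differentiable_perpGradField (hρ : ContDiff ℝ 2 (uncurry3 ρ)) :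
    Differentiable ℝ (perpGradField ρ) := fun q ↦
  (differentiableAt_const _).prodMk
    ((((contDiff_uncurry3_p2 hρ).differentiable one_ne_zero) q).fun_neg.prodMk
      (((contDiff_uncurry3_p1 hρ).differentiable one_ne_zero) q))

theorem fderiv_materialField_apply {q : ℝ × ℝ × ℝ}
    (hu1 : DifferentiableAt ℝ (uncurry3 u1) q) (hu2 : DifferentiableAt ℝ (uncurry3 u2) q)
    (v : ℝ × ℝ × ℝ) :
    fderiv ℝ (materialField u1 u2) q v =
      (0, fderiv ℝ (uncurry3 u1) q v, fderiv ℝ (uncurry3 u2) q v) := by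
  unfold materialField
  rw [fderiv_prodMk_prodMk_apply (differentiableAt_const _) hu1 hu2, fderiv_const_apply,
    zero_apply]

theorem fderiv_perpGradField_apply {q : ℝ × ℝ × ℝ}
    (h1 : DifferentiableAt ℝ (uncurry3 (p1 ρ)) q) (h2 : DifferentiableAt ℝ (uncurry3 (p2 ρ)) q)
    (v : ℝ × ℝ × ℝ) :
    fderiv ℝ (perpGradField ρ) q v =
      (0, -fderiv ℝ (uncurry3 (p2 ρ)) q v, fderiv ℝ (uncurry3 (p1 ρ)) q v) := by
  unfold perpGradField
  rw [fderiv_prodMk_prodMk_apply (differentiableAt_const _) h2.fun_neg h1, fderiv_const_apply,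
    zero_apply, fderiv_fun_neg]
  rfl

theorem lieBracket_materialField_perpGradField (hρ : ContDiff ℝ 2 (uncurry3 ρ))
    (hu1 : Differentiable ℝ (uncurry3 u1)) (hu2 : Differentiable ℝ (uncurry3 u2))
    (hdiv : ∀ t x y, p1 u1 t x y + p2 u2 t x y = 0)
    (htrans : ∀ t x y, pt ρ t x y + u1 t x y * p1 ρ t x y + u2 t x y * p2 ρ t x y = 0) :
    lieBracket ℝ (materialField u1 u2) (perpGradField ρ) = 0 := by
  funext ⟨t, x, y⟩
  have hR : Differentiable ℝ (uncurry3 ρ) := hρ.differentiable (by simp)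
  have hR1 : Differentiable ℝ (uncurry3 (p1 ρ)) :=
    (contDiff_uncurry3_p1 hρ).differentiable one_ne_zero
  have hR2 : Differentiable ℝ (uncurry3 (p2 ρ)) :=
    (contDiff_uncurry3_p2 hρ).differentiable one_ne_zero
  have hV := differentiable_materialField hu1 hu2
  have hinv : ∀ q, fderiv ℝ (uncurry3 ρ) q (materialField u1 u2 q) = 0 := by
    rintro ⟨t, x, y⟩
    rw [materialField, fderiv_uncurry3_apply (hR _), one_mul]
    exact htrans t x y
  have hp1ρ :=
    fderiv_fderiv_apply_of_fderiv_apply_eq_zero hρ.contDiffAt (hV (t, x, y)) hinv (0, 1, 0)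
  have hp2ρ :=
    fderiv_fderiv_apply_of_fderiv_apply_eq_zero hρ.contDiffAt (hV (t, x, y)) hinv (0, 0, 1)
  rw [← uncurry3_p1 hR, fderiv_materialField_apply (hu1 _) (hu2 _)] at hp1ρ
  rw [← uncurry3_p2 hR, fderiv_materialField_apply (hu1 _) (hu2 _)] at hp2ρ
  rw [lieBracket, fderiv_perpGradField_apply (hR1 _) (hR2 _),
    fderiv_materialField_apply (hu1 _) (hu2 _)]
  simp only [materialField, perpGradField, uncurry3, fderiv_uncurry3_apply (hR _),
    fderiv_uncurry3_apply (hR1 _), fderiv_uncurry3_apply (hR2 _), fderiv_uncurry3_apply (hu1 _),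
    fderiv_uncurry3_apply (hu2 _)] at hp1ρ hp2ρ ⊢
  simp only [Pi.zero_apply, Prod.mk_sub_mk, Prod.mk_eq_zero]
  refine ⟨by ring, ?_, ?_⟩
  · linear_combination -hp2ρ + p2 ρ t x y * hdiv t x y
  · linear_combination hp1ρ - p1 ρ t x y * hdiv t x y

theorem uncurry3_materialDeriv {f : ℝ → ℝ → ℝ → ℝ} (hf : Differentiable ℝ (uncurry3 f)) :
    uncurry3 (fun t a b ↦ pt f t a b + u1 t a b * p1 f t a b + u2 t a b * p2 f t a b) =
      fun q ↦ fderiv ℝ (uncurry3 f) q (materialField u1 u2 q) := by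
  funext ⟨t, a, b⟩
  rw [materialField, fderiv_uncurry3_apply (hf _), one_mul]
  rfl

theorem uncurry3_perpGradDeriv {f : ℝ → ℝ → ℝ → ℝ} (hf : Differentiable ℝ (uncurry3 f)) :
    uncurry3 (fun t a b ↦ -p2 ρ t a b * p1 f t a b + p1 ρ t a b * p2 f t a b) =
      fun q ↦ fderiv ℝ (uncurry3 f) q (perpGradField ρ q) := by
  funext ⟨t, a, b⟩
  rw [perpGradField, fderiv_uncurry3_apply (hf _), zero_mul, zero_add]
  rfl

end Fields

/-- If ρ is transported by a divergence-free C² field u in 2-D and X = ∇^⊥ρ, then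
the operators ∂_X and ∂_t + u·∇ commute on C² functions f. -/
theorem stmt13 (ρ u1 u2 f : ℝ → ℝ → ℝ → ℝ)
    (hρ : ContDiff ℝ 2 (fun p : ℝ × ℝ × ℝ => ρ p.1 p.2.1 p.2.2))
    (hu1 : ContDiff ℝ 2 (fun p : ℝ × ℝ × ℝ => u1 p.1 p.2.1 p.2.2))
    (hu2 : ContDiff ℝ 2 (fun p : ℝ × ℝ × ℝ => u2 p.1 p.2.1 p.2.2))
    (hf : ContDiff ℝ 2 (fun p : ℝ × ℝ × ℝ => f p.1 p.2.1 p.2.2))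
    (hdiv : ∀ t x y, p1 u1 t x y + p2 u2 t x y = 0)
    (htrans : ∀ t x y,
      pt ρ t x y + u1 t x y * p1 ρ t x y + u2 t x y * p2 ρ t x y = 0)
    (X1 X2 : ℝ → ℝ → ℝ → ℝ)
    (hX1 : ∀ t x y, X1 t x y = -(p2 ρ t x y))
    (hX2 : ∀ t x y, X2 t x y = p1 ρ t x y) :
    ∀ t x y, 0 ≤ t →
      X1 t x y * p1 (fun t a b => pt f t a b + u1 t a b * p1 f t a b + u2 t a b * p2 f t a b) t x y +
      X2 t x y * p2 (fun t a b => pt f t a b + u1 t a b * p1 f t a b + u2 t a b * p2 f t a b) t x y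
      =
      pt (fun t a b => X1 t a b * p1 f t a b + X2 t a b * p2 f t a b) t x y +
      u1 t x y * p1 (fun t a b => X1 t a b * p1 f t a b + X2 t a b * p2 f t a b) t x y +
      u2 t x y * p2 (fun t a b => X1 t a b * p1 f t a b + X2 t a b * p2 f t a b) t x y := by
  intro t x y _
  simp only [hX1, hX2]
  have hu1' : Differentiable ℝ (uncurry3 u1) := hu1.differentiable (by simp)
  have hu2' : Differentiable ℝ (uncurry3 u2) := hu2.differentiable (by simp)
  have hF : Differentiable ℝ (uncurry3 f) := hf.differentiable (by simp)
  have hDF : Differentiable ℝ (fderiv ℝ (uncurry3 f)) :=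
    (hf.fderiv_right (m := 1) (by norm_num)).differentiable one_ne_zero
  have hV := differentiable_materialField hu1' hu2'
  have hW := differentiable_perpGradField hρ
  have hcomm := fderiv_apply_comm_of_lieBracket_eq_zero (f := uncurry3 f) hf.contDiffAt
    (hV (t, x, y)) (hW (t, x, y))
    (congrFun (lieBracket_materialField_perpGradField hρ hu1' hu2' hdiv htrans) (t, x, y))
  rw [← uncurry3_materialDeriv hF, ← uncurry3_perpGradDeriv hF] at hcomm
  have hLfd := uncurry3_materialDeriv (u1 := u1) (u2 := u2) hF ▸ hDF.clm_apply hV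
  have hLgd := uncurry3_perpGradDeriv (ρ := ρ) hF ▸ hDF.clm_apply hW
  simp only [materialField, perpGradField, uncurry3] at hcomm
  rw [fderiv_uncurry3_apply (hLfd _), fderiv_uncurry3_apply (hLgd _)] at hcomm
  linear_combination -hcomm
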